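/- arXiv:1712.04864 — 10 statements merged into one kernel-verified Lean document; each statement's English description precedes it below -/
import Mathlib

section
/- Axiom (ax7) — cof φ → (φ → cof ψ) → cof (φ ∧ ψ) for all φ ψ : Prop — holds if and only if the class of cofibrations is closed under composition: for all types X, Y, Z and all cofibrations m : X → Y and n : Y → Z, the composite n ∘ m : X → Z is a cofibration. -/
/-! The image of `n ∘ m` at `z` is the conjunction of "`z` is in the image of `n`" with
"`z` is in the image of `n ∘ m`", and once `z = n y` the second conjunct is, by injectivity of
`n`, the image of `m` at `y`; so (ax7) makes the composite a cofibration. Conversely, for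
`U = {u : Unit // φ}` the inclusions `U → Unit` and `{v : U // ψ} → U` are cofibrations whose
composite has image `φ ∧ ψ`. -/

/-- A function `m : X → Y` is a cofibration (relative to `cof`) if it is injective
and its image is classified by a cofibrant proposition at every point. -/
def IsCofibration (cof : Prop → Prop) {X Y : Type} (m : X → Y) : Prop :=
  Function.Injective m ∧ ∀ y : Y, cof (∃ x, m x = y)

theorem isCofibration_subtype_val_iff (cof : Prop → Prop) {X : Type} (p : X → Prop) :
    IsCofibration cof (Subtype.val : {x // p x} → X) ↔ ∀ x, cof (p x) := by
  simp only [IsCofibration, Subtype.val_injective, true_and, Subtype.exists, exists_prop,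
    exists_eq_right]

theorem Function.Injective.exists_comp_eq_iff {X Y Z : Type} {m : X → Y} {n : Y → Z}
    (hn : n.Injective) {y : Y} {z : Z} (hy : n y = z) :
    (∃ x, n (m x) = z) ↔ ∃ x, m x = y := by
  subst hy
  simp only [hn.eq_iff]

theorem IsCofibration.comp {cof : Prop → Prop}
    (ax7 : ∀ φ ψ : Prop, cof φ → (φ → cof ψ) → cof (φ ∧ ψ))
    {X Y Z : Type} {m : X → Y} {n : Y → Z} (hm : IsCofibration cof m)
    (hn : IsCofibration cof n) : IsCofibration cof (n ∘ m) := by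
  refine ⟨hn.1.comp hm.1, fun z => ?_⟩
  have image_comp : (∃ x, (n ∘ m) x = z) ↔ (∃ y, n y = z) ∧ ∃ x, n (m x) = z :=
    ⟨fun ⟨x, hx⟩ => ⟨⟨m x, hx⟩, x, hx⟩, fun ⟨_, h⟩ => h⟩
  rw [image_comp]
  refine ax7 _ _ (hn.2 z) fun ⟨y, hy⟩ => ?_
  rw [hn.1.exists_comp_eq_iff hy]
  exact hm.2 y

theorem cof_and_of_isCofibration_comp {cof : Prop → Prop}
    (hcomp : ∀ (X Y Z : Type) (m : X → Y) (n : Y → Z),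
      IsCofibration cof m → IsCofibration cof n → IsCofibration cof (n ∘ m))
    {φ ψ : Prop} (hφ : cof φ) (hψ : φ → cof ψ) : cof (φ ∧ ψ) := by
  have hm := (isCofibration_subtype_val_iff cof fun _ : {u : Unit // φ} => ψ).2 fun u => hψ u.2
  have hn := (isCofibration_subtype_val_iff cof fun _ : Unit => φ).2 fun _ => hφ
  have image_comp :
      (∃ x : {v : {u : Unit // φ} // ψ}, (Subtype.val ∘ Subtype.val) x = ()) ↔ φ ∧ ψ :=
    ⟨fun ⟨x, _⟩ => ⟨x.1.2, x.2⟩, fun ⟨h, h'⟩ => ⟨⟨⟨(), h⟩, h'⟩, rfl⟩⟩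
  have h := (hcomp _ _ _ _ _ hm hn).2 ()
  rwa [image_comp] at h

/-- Axiom (ax7) holds iff cofibrations are closed under composition. -/
theorem ax7_iff_cofibrations_closed_under_composition (cof : Prop → Prop) :
    (∀ φ ψ : Prop, cof φ → (φ → cof ψ) → cof (φ ∧ ψ)) ↔
      (∀ (X Y Z : Type) (m : X → Y) (n : Y → Z),
        IsCofibration cof m → IsCofibration cof n → IsCofibration cof (n ∘ m)) :=
  ⟨fun ax7 _ _ _ _ _ => IsCofibration.comp ax7,
    fun hcomp _ _ => cof_and_of_isCofibration_comp hcomp⟩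
end

section
/- There is a function fill assigning to every Γ : Type, family A : Γ → Type, endpoint e ∈ {i0, i1}, fibration structure α : isFib A and path p : I → Γ a filling structure fill e α p : Fill e (A ∘ p), such that: (i) for all φ with cof φ, f : [φ] → Π(A ∘ p) and a : A (p e) with (φ, f)@e ↗ a, one has (fill e α p φ f a) ē = α e p φ f a; and (ii) fill is stable under reindexing: for every γ : Δ → Γ and p : I → Δ, fill e α (γ ∘ p) = fill e (α[γ]) p. -/
namespace CCHM

variable {I : Type}

/-- The two endpoints of the interval: `false ↦ i0`, `true ↦ i1`;
negation `!e` swaps the endpoints. -/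
def pt (i0 i1 : I) : Bool → I := fun e => bif e then i1 else i0

/-- A composition structure for an `I`-indexed family of types:
any cofibrant partial path extended at endpoint `e` is extended at the other
endpoint `!e`. -/
def Comp (i0 i1 : I) (cof : Prop → Prop) (e : Bool) (A : I → Type) : Type :=
  (φ : Prop) → cof φ → (f : φ → (i : I) → A i) →
    (a0 : A (pt i0 i1 e)) → (∀ u : φ, f u (pt i0 i1 e) = a0) →
    { a1 : A (pt i0 i1 (!e)) // ∀ u : φ, f u (pt i0 i1 (!e)) = a1 }

/-- A (CCHM) fibration structure on a family `A : Γ → Type`. -/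
def isFib (i0 i1 : I) (cof : Prop → Prop) {Γ : Type} (A : Γ → Type) : Type :=
  (e : Bool) → (p : I → Γ) → Comp i0 i1 cof e (fun i => A (p i))

/-- Reindexing of fibration structures: `α[γ] e p := α e (γ ∘ p)`. -/
def reind (i0 i1 : I) (cof : Prop → Prop) {Δ Γ : Type} {A : Γ → Type}
    (γ : Δ → Γ) (α : isFib i0 i1 cof A) : isFib i0 i1 cof (fun x => A (γ x)) :=
  fun e p => α e (fun i => γ (p i))

/-- A filling structure for an `I`-indexed family of types at endpoint `e`. -/
def Fill (i0 i1 : I) (cof : Prop → Prop) (e : Bool) (A : I → Type) : Type :=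
  (φ : Prop) → cof φ → (f : φ → (i : I) → A i) →
    (a : A (pt i0 i1 e)) → (∀ u : φ, f u (pt i0 i1 e) = a) →
    { g : (i : I) → A i // (∀ u : φ, f u = g) ∧ g (pt i0 i1 e) = a }


/-! Fill from `e` by composing, for each `i`, along the squeezed line `j ↦ c i j`, where the
connection `c` (`⊓` for `e = i0`, `⊔` for `e = i1`) is constant at `e` when `i = e` and the
identity when `i = ē`. The partial element is `f` reparametrised by `c i`, extended by the constant
face `a` on `i = e`. At `i = e` the composition therefore returns `a`; at `i = ē`, where `e ≠ ē`
makes the extra face empty, it is the composition of `(φ, f)` itself. Since `α` is only used along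
paths, the construction commutes with reindexing on the nose. -/

structure IsConnection (i0 i1 : I) (e : Bool) (c : I → I → I) : Prop where
  apply_src (i : I) : c i (pt i0 i1 e) = pt i0 i1 e
  apply_tgt (i : I) : c i (pt i0 i1 (!e)) = i
  src_apply (j : I) : c (pt i0 i1 e) j = pt i0 i1 e
  tgt_apply (j : I) : c (pt i0 i1 (!e)) j = j

theorem isConnection_cond {i0 i1 : I} {cnx dsj : I → I → I}
    (hcnx : ∀ x, cnx i0 x = i0 ∧ cnx x i0 = i0 ∧ cnx i1 x = x ∧ cnx x i1 = x)
    (hdsj : ∀ x, dsj i0 x = x ∧ dsj x i0 = x ∧ dsj i1 x = i1 ∧ dsj x i1 = i1) (e : Bool) :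
    IsConnection i0 i1 e (bif e then dsj else cnx) := by
  cases e
  · exact ⟨fun i => (hcnx i).2.1, fun i => (hcnx i).2.2.2, fun j => (hcnx j).1,
      fun j => (hcnx j).2.2.1⟩
  · exact ⟨fun i => (hdsj i).2.2.2, fun i => (hdsj i).2.1, fun j => (hdsj j).2.2.1,
      fun j => (hdsj j).1⟩

theorem pt_not_ne {i0 i1 : I} (h : i0 ≠ i1) (e : Bool) : pt i0 i1 (!e) ≠ pt i0 i1 e := by
  cases e
  · exact h.symm
  · exact h

theorem cof_eq_pt {i0 i1 : I} {cof : Prop → Prop} (h : ∀ i : I, cof (i = i0) ∧ cof (i = i1))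
    (e : Bool) (i : I) : cof (i = pt i0 i1 e) := by
  cases e
  · exact (h i).1
  · exact (h i).2

section FillOfComp

variable {i0 i1 : I} {cof : Prop → Prop} {e : Bool} {c : I → I → I} {B : I → Type}

open Classical in
noncomputable def tube (hc : IsConnection i0 i1 e c) {φ : Prop} (f : φ → (j : I) → B j)
    (a : B (pt i0 i1 e)) (i : I) : φ ∨ i = pt i0 i1 e → (j : I) → B (c i j) :=
  fun u j => if v : φ then f v (c i j) else
    cast (congrArg B (by rw [u.resolve_left v, hc.src_apply])) a

theorem tube_heq_of_pos (hc : IsConnection i0 i1 e c) {φ : Prop} (f : φ → (j : I) → B j)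
    (a : B (pt i0 i1 e)) (i : I) (u : φ ∨ i = pt i0 i1 e) (j : I) (v : φ) :
    tube hc f a i u j ≍ f v (c i j) := by
  rw [tube, dif_pos v]

theorem tube_heq_of_apply_eq_src (hc : IsConnection i0 i1 e c) {φ : Prop}
    {f : φ → (j : I) → B j} {a : B (pt i0 i1 e)} (ha : ∀ u : φ, f u (pt i0 i1 e) = a) (i : I)
    (u : φ ∨ i = pt i0 i1 e) {j : I} (hj : c i j = pt i0 i1 e) :
    tube hc f a i u j ≍ a := by
  by_cases v : φ
  · exact (tube_heq_of_pos hc f a i u j v).trans ((congr_arg_heq (f v) hj).trans (ha v).heq)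
  · rw [tube, dif_neg v]
    exact cast_heq _ _

noncomputable def compTube (hc : IsConnection i0 i1 e c) (hcof : ∀ i, cof (i = pt i0 i1 e))
    (hor : ∀ φ ψ : Prop, cof φ → cof ψ → cof (φ ∨ ψ))
    (comp : ∀ i, Comp i0 i1 cof e (fun j => B (c i j))) {φ : Prop} (hφ : cof φ)
    (f : φ → (j : I) → B j) (a : B (pt i0 i1 e)) (ha : ∀ u : φ, f u (pt i0 i1 e) = a) (i : I) :
    { b : B (c i (pt i0 i1 (!e))) // ∀ u, tube hc f a i u (pt i0 i1 (!e)) = b } :=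
  comp i _ (hor _ _ hφ (hcof i)) (tube hc f a i) (cast (congrArg B (hc.apply_src i).symm) a)
    fun u => eq_of_heq <|
      (tube_heq_of_apply_eq_src hc ha i u (hc.apply_src i)).trans (cast_heq _ _).symm

noncomputable def fillOfComp (hc : IsConnection i0 i1 e c) (hcof : ∀ i, cof (i = pt i0 i1 e))
    (hor : ∀ φ ψ : Prop, cof φ → cof ψ → cof (φ ∨ ψ))
    (comp : ∀ i, Comp i0 i1 cof e (fun j => B (c i j))) : Fill i0 i1 cof e B :=
  fun _ hφ f a ha =>
    ⟨fun i => cast (congrArg B (hc.apply_tgt i)) (compTube hc hcof hor comp hφ f a ha i).1,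
      fun u => funext fun i => eq_of_heq <|
        (congr_arg_heq (f u) (hc.apply_tgt i).symm).trans <|
        (tube_heq_of_pos hc f a i (.inl u) _ u).symm.trans <|
        ((compTube hc hcof hor comp hφ f a ha i).2 _).heq.trans (cast_heq _ _).symm,
      eq_of_heq <| (cast_heq _ _).trans <|
        ((compTube hc hcof hor comp hφ f a ha _).2 (.inr rfl)).heq.symm.trans <|
        tube_heq_of_apply_eq_src hc ha _ _ (hc.apply_tgt _)⟩

end FillOfComp

section FibFill

variable {i0 i1 : I} {cof : Prop → Prop} {e : Bool} {c : I → I → I} {Γ : Type} {A : Γ → Type}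

theorem isFib.heq_of_heq (α : isFib i0 i1 cof A) {p q : I → Γ} (hpq : p = q)
    {φ ψ : Prop} (hφψ : φ = ψ) (hφ : cof φ) (hψ : cof ψ) {f : φ → (j : I) → A (p j)}
    {g : ψ → (j : I) → A (q j)} (hfg : f ≍ g) {a : A (p (pt i0 i1 e))}
    {b : A (q (pt i0 i1 e))} (hab : a ≍ b) (ha : ∀ u, f u (pt i0 i1 e) = a)
    (hb : ∀ u, g u (pt i0 i1 e) = b) :
    (α e p φ hφ f a ha).1 ≍ (α e q ψ hψ g b hb).1 := by
  subst hpq hφψ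
  cases hfg
  cases hab
  rfl

noncomputable def isFib.fill (hc : IsConnection i0 i1 e c) (hcof : ∀ i, cof (i = pt i0 i1 e))
    (hor : ∀ φ ψ : Prop, cof φ → cof ψ → cof (φ ∨ ψ)) (α : isFib i0 i1 cof A) (p : I → Γ) :
    Fill i0 i1 cof e (fun i => A (p i)) :=
  fillOfComp hc hcof hor fun i => α e fun j => p (c i j)

theorem isFib.fill_apply_tgt (hc : IsConnection i0 i1 e c) (hcof : ∀ i, cof (i = pt i0 i1 e))
    (hor : ∀ φ ψ : Prop, cof φ → cof ψ → cof (φ ∨ ψ)) (hne : pt i0 i1 (!e) ≠ pt i0 i1 e)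
    (α : isFib i0 i1 cof A) (p : I → Γ) {φ : Prop} (hφ : cof φ) (f : φ → (i : I) → A (p i))
    (a : A (p (pt i0 i1 e))) (ha : ∀ u : φ, f u (pt i0 i1 e) = a) :
    (α.fill hc hcof hor p φ hφ f a ha).1 (pt i0 i1 (!e)) = (α e p φ hφ f a ha).1 := by
  have hφ' : (φ ∨ pt i0 i1 (!e) = pt i0 i1 e) = φ := propext (or_iff_left hne)
  have hp : (fun j => p (c (pt i0 i1 (!e)) j)) = p := funext fun j => congrArg p (hc.tgt_apply j)
  refine eq_of_heq ((cast_heq _ (compTube hc hcof hor _ hφ f a ha (pt i0 i1 (!e))).1).trans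
    (α.heq_of_heq hp hφ' _ hφ ?_ (cast_heq _ _) _ ha))
  refine Function.hfunext hφ' fun u v _ => Function.hfunext rfl fun j j' hj => ?_
  cases hj
  exact (tube_heq_of_pos hc f a _ u j v).trans (congr_arg_heq (f v) (hc.tgt_apply j))

end FibFill

/-- Filling structures can be constructed from composition structures, agreeing with
the composition at the far endpoint and stably under reindexing. -/
theorem fill_from_comp (i0 i1 : I) (cof : Prop → Prop)
    (ax2 : i0 ≠ i1)
    (cnx dsj : I → I → I)
    (ax3 : ∀ x, cnx i0 x = i0 ∧ cnx x i0 = i0 ∧ cnx i1 x = x ∧ cnx x i1 = x)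
    (ax4 : ∀ x, dsj i0 x = x ∧ dsj x i0 = x ∧ dsj i1 x = i1 ∧ dsj x i1 = i1)
    (ax5 : ∀ i : I, cof (i = i0) ∧ cof (i = i1))
    (ax6 : ∀ φ ψ : Prop, cof φ → cof ψ → cof (φ ∨ ψ)) :
    ∃ fill : (Γ : Type) → (A : Γ → Type) → (e : Bool) → isFib i0 i1 cof A →
        (p : I → Γ) → Fill i0 i1 cof e (fun i => A (p i)),
      (∀ (Γ : Type) (A : Γ → Type) (e : Bool) (α : isFib i0 i1 cof A) (p : I → Γ)
          (φ : Prop) (hφ : cof φ) (f : φ → (i : I) → A (p i)) (a : A (p (pt i0 i1 e)))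
          (ha : ∀ u : φ, f u (pt i0 i1 e) = a),
        (fill Γ A e α p φ hφ f a ha).1 (pt i0 i1 (!e)) = (α e p φ hφ f a ha).1) ∧
      (∀ (Δ Γ : Type) (A : Γ → Type) (e : Bool) (α : isFib i0 i1 cof A)
          (γ : Δ → Γ) (p : I → Δ),
        fill Γ A e α (fun i => γ (p i)) =
          fill Δ (fun x => A (γ x)) e (reind i0 i1 cof γ α) p) :=
  ⟨fun _ _ e α p => α.fill (isConnection_cond ax3 ax4 e) (cof_eq_pt ax5 e) ax6 p,
    fun _ _ e α p _ hφ f a ha =>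
      α.fill_apply_tgt _ _ ax6 (pt_not_ne ax2 e) p hφ f a ha,
    fun _ _ _ _ _ _ _ => rfl⟩

end CCHM
end

section
/- For every Γ : Type and families A1, A2 : Γ → Type, there is a function isFib⊕ : isFib A1 → isFib A2 → isFib (fun x => A1 x ⊕ A2 x), and it is stable under reindexing: for every γ : Δ → Γ, (isFib⊕ α1 α2)[γ] = isFib⊕ (α1[γ]) (α2[γ]). -/
/-!
Since the interval is connected, every partial path in `A1 ⊕ A2` lies entirely in the summand
containing its initial value, so it can be composed there. The resulting composition on the path
`p` only involves `α1 e p` and `α2 e p`, hence commutes with reindexing definitionally.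
-/

namespace CCHM

variable {I : Type}

def IsInternallyConnected (I : Type) : Prop :=
  ∀ φ : I → Prop, (∀ i, φ i ∨ ¬ φ i) → (∀ i, φ i) ∨ (∀ i, ¬ φ i)

theorem IsInternallyConnected.bool_eq (hI : IsInternallyConnected I) (b : I → Bool)
    (i j : I) : b i = b j := by
  rcases hI (fun i => b i = true) (fun i => em _) with h | h
  · rw [h i, h j]
  · simp only [Bool.not_eq_true] at h
    rw [h i, h j]

section Sum

variable {i0 i1 : I} {cof : Prop → Prop} {e : Bool} {A B : I → Type}

def Comp.sumOfInl (hI : IsInternallyConnected I) (c : Comp i0 i1 cof e A) (φ : Prop)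
    (hφ : cof φ) (f : φ → (i : I) → A i ⊕ B i) (a0 : A (pt i0 i1 e))
    (hf : ∀ u : φ, f u (pt i0 i1 e) = .inl a0) :
    { a1 : A (pt i0 i1 (!e)) ⊕ B (pt i0 i1 (!e)) // ∀ u : φ, f u (pt i0 i1 (!e)) = a1 } :=
  have isLeft : ∀ u i, (f u i).isLeft := fun u i => by
    rw [hI.bool_eq (fun i => (f u i).isLeft) i (pt i0 i1 e), hf u]
    rfl
  let r := c φ hφ (fun u i => (f u i).getLeft (isLeft u i)) a0
    fun u => (Sum.getLeft_eq_iff _).2 (hf u)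
  ⟨.inl r.1, fun u => (Sum.getLeft_eq_iff _).1 (r.2 u)⟩

def Comp.sum (hI : IsInternallyConnected I) (c1 : Comp i0 i1 cof e A)
    (c2 : Comp i0 i1 cof e B) : Comp i0 i1 cof e (fun i => A i ⊕ B i)
  | φ, hφ, f, .inl a0, hf => c1.sumOfInl hI φ hφ f a0 hf
  | φ, hφ, f, .inr b0, hf =>
    -- the right case is the left one for `B ⊕ A`, via `Sum.swap`
    let r := c2.sumOfInl hI φ hφ (fun u i => (f u i).swap) b0 fun u => by rw [hf u]; rfl
    ⟨r.1.swap, fun u => by rw [← r.2 u, Sum.swap_swap]⟩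

end Sum

def isFib.sum {i0 i1 : I} {cof : Prop → Prop} (hI : IsInternallyConnected I) {Γ : Type}
    {A1 A2 : Γ → Type} (α1 : isFib i0 i1 cof A1) (α2 : isFib i0 i1 cof A2) :
    isFib i0 i1 cof (fun x => A1 x ⊕ A2 x) :=
  fun e p => (α1 e p).sum hI (α2 e p)

/-- Fibration structures lift through binary coproducts, stably under reindexing,
assuming the interval is internally connected (ax1). -/
theorem fib_coprod (i0 i1 : I) (cof : Prop → Prop)
    (ax1 : ∀ φ : I → Prop, (∀ i, φ i ∨ ¬ φ i) → (∀ i, φ i) ∨ (∀ i, ¬ φ i)) :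
    ∃ isFibSum : {Γ : Type} → {A1 A2 : Γ → Type} →
        isFib i0 i1 cof A1 → isFib i0 i1 cof A2 →
        isFib i0 i1 cof (fun x => A1 x ⊕ A2 x),
      ∀ (Δ Γ : Type) (A1 A2 : Γ → Type)
        (α1 : isFib i0 i1 cof A1) (α2 : isFib i0 i1 cof A2) (γ : Δ → Γ),
        reind i0 i1 cof γ (isFibSum α1 α2) =
          isFibSum (reind i0 i1 cof γ α1) (reind i0 i1 cof γ α2) :=
  ⟨isFib.sum ax1, fun _ _ _ _ _ _ _ => rfl⟩

end CCHM
end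

section
/- For every Γ : Type and A : Γ → Type there is a function isFibPath : isFib A → isFib (Path A), and it is stable under reindexing: for every γ : Δ → Γ, (isFibPath α)[γ ×'' id] = isFibPath (α[γ]), where γ ×'' id : (Σ x : Δ, A (γ x) × A (γ x)) → (Σ x : Γ, A x × A x) sends ⟨x, c⟩ to ⟨γ x, c⟩. -/
namespace CCHM

variable {I : Type}

/-- The type of paths from `a0` to `a1` in `X`. -/
def PathT (i0 i1 : I) (X : Type) (a0 a1 : X) : Type :=
  { p : I → X // p i0 = a0 ∧ p i1 = a1 }

/-- The family of path types associated with a family `A : Γ → Type`. -/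
def PathFam (i0 i1 : I) {Γ : Type} (A : Γ → Type) : (Σ x : Γ, A x × A x) → Type :=
  fun y => PathT i0 i1 (A y.1) y.2.1 y.2.2

/-!
A family of paths over a line in the base is composed one point `j` of the path at a time:
at `j`, compose in `A` the given partial family of paths evaluated at `j`, glued with the
endpoint sections `a`, `b` on the cofibration `j = i0 ∨ j = i1`. Since `i0 ≠ i1` the two
boundary pieces never overlap, so the lid at `j = i0` (resp. `i1`) is the composite of `a`
(resp. `b`). The construction only ever calls `α` at the projected base line, so it commutes
with reindexing definitionally.
-/

section Join

variable {φ ψ : Prop} {X : Type}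

open Classical in
/-- Extends both `f` and `g` only when they agree on `φ ∧ ψ`. -/
noncomputable def joinPartial (f : φ → X) (g : ψ → X) : φ ∨ ψ → X :=
  fun w => if h : φ then f h else g (w.resolve_left h)

theorem joinPartial_of_left (f : φ → X) (g : ψ → X) (u : φ) (w : φ ∨ ψ) :
    joinPartial f g w = f u := by
  simp only [joinPartial, dif_pos u]

theorem joinPartial_induction {f : φ → X} {g : ψ → X} (P : X → Prop)
    (hf : ∀ u, P (f u)) (hg : ∀ v, P (g v)) (w : φ ∨ ψ) : P (joinPartial f g w) := by
  unfold joinPartial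
  split_ifs with h
  exacts [hf h, hg _]

end Join

section PathComposition

variable {i0 i1 : I} {A : I → Type} {a b : (i : I) → A i} {φ : Prop}

noncomputable def pathTube (f : φ → (i : I) → PathT i0 i1 (A i) (a i) (b i)) (j : I) :
    φ ∨ (j = i0 ∨ j = i1) → (i : I) → A i :=
  joinPartial (fun u i => (f u i).1 j) (joinPartial (fun _ => a) (fun _ => b))

variable {f : φ → (i : I) → PathT i0 i1 (A i) (a i) (b i)}

theorem pathTube_of_left (u : φ) {j : I} (w : φ ∨ (j = i0 ∨ j = i1)) :
    pathTube f j w = fun i => (f u i).1 j :=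
  joinPartial_of_left _ _ u w

theorem pathTube_i0 (ax2 : i0 ≠ i1) (w : φ ∨ (i0 = i0 ∨ i0 = i1)) : pathTube f i0 w = a := by
  refine joinPartial_induction (· = a) (fun u => funext fun i => (f u i).2.1) ?_ w
  exact joinPartial_induction (· = a) (fun _ => rfl) fun h => absurd h ax2

theorem pathTube_i1 (ax2 : i0 ≠ i1) (w : φ ∨ (i1 = i0 ∨ i1 = i1)) : pathTube f i1 w = b := by
  refine joinPartial_induction (· = b) (fun u => funext fun i => (f u i).2.2) ?_ w
  exact joinPartial_induction (· = b) (fun h => absurd h.symm ax2) fun _ => rfl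

theorem pathTube_apply_of_extends {k : I} {c : PathT i0 i1 (A k) (a k) (b k)}
    (hc : ∀ u, f u k = c) {j : I} (w : φ ∨ (j = i0 ∨ j = i1)) :
    pathTube f j w k = c.1 j := by
  let P (t : (i : I) → A i) : Prop := t k = c.1 j
  refine joinPartial_induction P (fun u => by simp only [P, hc u]) ?_ w
  refine joinPartial_induction P ?_ ?_
  · rintro rfl; exact c.2.1.symm
  · rintro rfl; exact c.2.2.symm

end PathComposition

noncomputable def compPath {i0 i1 : I} (cof : Prop → Prop) {A : I → Type} (ax2 : i0 ≠ i1)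
    (ax5 : ∀ i : I, cof (i = i0) ∧ cof (i = i1))
    (ax6 : ∀ φ ψ : Prop, cof φ → cof ψ → cof (φ ∨ ψ)) {e : Bool}
    (c : Comp i0 i1 cof e A)
    (a b : (i : I) → A i) : Comp i0 i1 cof e (fun i => PathT i0 i1 (A i) (a i) (b i)) :=
  fun φ hφ f c0 hc0 =>
    let lid (j : I) := c _ (ax6 _ _ hφ (ax6 _ _ (ax5 j).1 (ax5 j).2)) (pathTube f j) (c0.1 j)
      (pathTube_apply_of_extends hc0)
    ⟨⟨fun j => (lid j).1,
      ⟨show (lid i0).1 = _ by rw [← (lid i0).2 (Or.inr (Or.inl rfl)), pathTube_i0 ax2],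
       show (lid i1).1 = _ by rw [← (lid i1).2 (Or.inr (Or.inr rfl)), pathTube_i1 ax2]⟩⟩,
     fun u => Subtype.ext <| funext fun j =>
       (congrFun (pathTube_of_left u (Or.inl u)) _).symm.trans ((lid j).2 (Or.inl u))⟩

noncomputable def isFibPath (i0 i1 : I) (cof : Prop → Prop) (ax2 : i0 ≠ i1)
    (ax5 : ∀ i : I, cof (i = i0) ∧ cof (i = i1))
    (ax6 : ∀ φ ψ : Prop, cof φ → cof ψ → cof (φ ∨ ψ)) {Γ : Type} {A : Γ → Type}
    (α : isFib i0 i1 cof A) : isFib i0 i1 cof (PathFam i0 i1 A) :=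
  fun e p => compPath cof ax2 ax5 ax6 (α e fun i => (p i).1) (fun i => (p i).2.1)
    fun i => (p i).2.2

/-- Fibration structures lift through path types, stably under reindexing. -/
theorem fib_path (i0 i1 : I) (cof : Prop → Prop)
    (ax2 : i0 ≠ i1)
    (ax5 : ∀ i : I, cof (i = i0) ∧ cof (i = i1))
    (ax6 : ∀ φ ψ : Prop, cof φ → cof ψ → cof (φ ∨ ψ)) :
    ∃ isFibPath : {Γ : Type} → {A : Γ → Type} →
        isFib i0 i1 cof A → isFib i0 i1 cof (PathFam i0 i1 A),
      ∀ (Δ Γ : Type) (A : Γ → Type) (α : isFib i0 i1 cof A) (γ : Δ → Γ),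
        reind i0 i1 cof
            (fun y : Σ x : Δ, A (γ x) × A (γ x) => (⟨γ y.1, y.2⟩ : Σ x : Γ, A x × A x))
            (isFibPath α) =
          isFibPath (reind i0 i1 cof γ α) := by
  exact ⟨isFibPath i0 i1 cof ax2 ax5 ax6, fun _ _ _ _ _ => rfl⟩

end CCHM
end

section
/- Define Id A : (Σ x : Γ, A x × A x) → Type by Id A (x, (a0, a1)) := Σ p : (a0 ⇝ a1), {φ : Prop // cof φ ∧ (φ → ∀ i, p.1 i = a0)}. Then: (i) for every Γ and A : Γ → Type there is isFibId : isFib A → isFib (Id A); (ii) with refl a : Id A (x, (a, a)) given by the constant path at a paired with the proposition True, there is an eliminator J assigning to every x : Γ, a0 : A x, family B : (Σ a : A x, Id A (x, (a0, a))) → Type with β : isFib B, a1 : A x, e : Id A (x, (a0, a1)) and b : B ⟨a0, refl a0⟩ an element J A x a0 B β a1 e b : B ⟨a1, e⟩, satisfying the computation rule J A x a0 B β a0 (refl a0) b = b. -/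
namespace CCHM

variable {I : Type}

/-- Swan-style identity types: a path together with a cofibrant proposition
forcing the path to be constant. -/
def IdFam (i0 i1 : I) (cof : Prop → Prop) {Γ : Type} (A : Γ → Type) :
    (Σ x : Γ, A x × A x) → Type :=
  fun y => Σ p : PathT i0 i1 (A y.1) y.2.1 y.2.2,
    { φ : Prop // cof φ ∧ (φ → ∀ i, p.1 i = y.2.1) }

/-- Reflexivity: the constant path together with the proposition `True`. -/
def reflId (i0 i1 : I) (cof : Prop → Prop) (hT : cof True) {Γ : Type} {A : Γ → Type}
    (x : Γ) (a : A x) : IdFam i0 i1 cof A ⟨x, (a, a)⟩ :=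
  ⟨⟨fun _ => a, rfl, rfl⟩, ⟨True, hT, fun _ _ => rfl⟩⟩

/-!
Composition in `IdFam A` is computed one path coordinate `j` at a time: compose in `A`, with the
given partial element of paths extended by the endpoints of the path at `j = i0` and `j = i1`;
the result is constant on `φ ∧ ∀ u : φ, ψ u`, where `ψ u` is the cofibration carried by the
given partial element at `u` on the target end. The eliminator `J` transports `b` along the contraction
`i ↦ (e i, j ↦ e (i ⊓ j))` of the based path space, relative to the cofibration carried by `e`,
on which the contraction is constant. For `refl` that cofibration is `True`, so the
composition returns `b` itself.
-/

variable {i0 i1 : I} {cof : Prop → Prop}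

theorem IdFam.ext {Γ : Type} {A : Γ → Type} {y : Σ x : Γ, A x × A x}
    {q r : IdFam i0 i1 cof A y} (hp : q.1.1 = r.1.1) (hφ : q.2.1 ↔ r.2.1) : q = r := by
  obtain ⟨⟨p, _⟩, ⟨φ, _⟩⟩ := q
  obtain ⟨⟨p', _⟩, ⟨φ', _⟩⟩ := r
  obtain rfl : p = p' := hp
  obtain rfl : φ = φ' := propext hφ
  rfl

theorem IdFam.sigma_ext {Γ : Type} {A : Γ → Type} {x : Γ} {a0 a a' : A x} (h : a = a')
    {u : IdFam i0 i1 cof A ⟨x, (a0, a)⟩} {v : IdFam i0 i1 cof A ⟨x, (a0, a')⟩}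
    (hp : u.1.1 = v.1.1) (hφ : u.2.1 ↔ v.2.1) :
    (⟨a, u⟩ : Σ b : A x, IdFam i0 i1 cof A ⟨x, (a0, b)⟩) = ⟨a', v⟩ := by
  subst h
  rw [IdFam.ext hp hφ]

section Fibrancy

variable {Γ : Type} {A : Γ → Type} (p : I → Σ x : Γ, A x × A x) {φ : Prop}
  (f : φ → (i : I) → IdFam i0 i1 cof A (p i))

open Classical in
/-- Only its values where `φ ∨ j = i0 ∨ j = i1` holds matter. -/
noncomputable def idTube (j i : I) : A (p i).1 :=
  if v : φ then (f v i).1.1 j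
  else if j = i0 then (p i).2.1
  else (p i).2.2

theorem idTube_of_cof (v : φ) (j i : I) : idTube p f j i = (f v i).1.1 j :=
  dif_pos v

theorem idTube_left (i : I) : idTube p f i0 i = (p i).2.1 := by
  by_cases v : φ
  · rw [idTube_of_cof p f v]
    exact (f v i).1.2.1
  · rw [idTube, dif_neg v, if_pos rfl]

theorem idTube_right (ax2 : i0 ≠ i1) (i : I) : idTube p f i1 i = (p i).2.2 := by
  by_cases v : φ
  · rw [idTube_of_cof p f v]
    exact (f v i).1.2.2
  · rw [idTube, dif_neg v, if_neg (Ne.symm ax2)]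

variable (ax2 : i0 ≠ i1) (ax5 : ∀ i : I, cof (i = i0) ∧ cof (i = i1))
  (ax6 : ∀ φ ψ : Prop, cof φ → cof ψ → cof (φ ∨ ψ))
  (α : isFib i0 i1 cof A) (e : Bool) (hφ : cof φ) (q0 : IdFam i0 i1 cof A (p (pt i0 i1 e)))
  (hq0 : ∀ v : φ, f v (pt i0 i1 e) = q0)

noncomputable def idCompPath (j : I) :
    { a : A (p (pt i0 i1 (!e))).1 // ∀ _ : φ ∨ j = i0 ∨ j = i1, idTube p f j _ = a } :=
  α e (fun i => (p i).1) _ (ax6 _ _ hφ (ax6 _ _ (ax5 j).1 (ax5 j).2)) (fun _ => idTube p f j)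
    (q0.1.1 j) fun u => by
      rcases u with v | h | h
      · rw [idTube_of_cof p f v, hq0 v]
      · rw [h, idTube_left, q0.1.2.1]
      · rw [h, idTube_right p f ax2, q0.1.2.2]

theorem idCompPath_of_cof (v : φ) (j : I) :
    (idCompPath p f ax2 ax5 ax6 α e hφ q0 hq0 j).1 = (f v (pt i0 i1 (!e))).1.1 j := by
  rw [← (idCompPath p f ax2 ax5 ax6 α e hφ q0 hq0 j).2 (Or.inl v), idTube_of_cof p f v]

theorem idCompPath_left :
    (idCompPath p f ax2 ax5 ax6 α e hφ q0 hq0 i0).1 = (p (pt i0 i1 (!e))).2.1 := by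
  rw [← (idCompPath p f ax2 ax5 ax6 α e hφ q0 hq0 i0).2 (Or.inr (Or.inl rfl)), idTube_left]

theorem idCompPath_right :
    (idCompPath p f ax2 ax5 ax6 α e hφ q0 hq0 i1).1 = (p (pt i0 i1 (!e))).2.2 := by
  rw [← (idCompPath p f ax2 ax5 ax6 α e hφ q0 hq0 i1).2 (Or.inr (Or.inr rfl)),
    idTube_right p f ax2]

end Fibrancy

noncomputable def isFib.idFam (ax2 : i0 ≠ i1) (ax5 : ∀ i : I, cof (i = i0) ∧ cof (i = i1))
    (ax6 : ∀ φ ψ : Prop, cof φ → cof ψ → cof (φ ∨ ψ))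
    (ax7 : ∀ φ ψ : Prop, cof φ → (φ → cof ψ) → cof (φ ∧ ψ))
    {Γ : Type} {A : Γ → Type} (α : isFib i0 i1 cof A) : isFib i0 i1 cof (IdFam i0 i1 cof A) :=
  fun e p φ hφ f q0 hq0 => by
    let r := idCompPath p f ax2 ax5 ax6 α e hφ q0 hq0
    have hr := idCompPath_of_cof p f ax2 ax5 ax6 α e hφ q0 hq0
    let ψ := ∀ v : φ, (f v (pt i0 i1 (!e))).2.1
    have hψ : φ → cof ψ := fun v => by
      rw [show ψ = (f v _).2.1 from propext ⟨fun h => h v, fun h _ => h⟩]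
      exact (f v _).2.2.1
    refine ⟨⟨⟨fun j => (r j).1, idCompPath_left .., idCompPath_right ..⟩,
      ⟨φ ∧ ψ, ax7 _ _ hφ hψ, ?_⟩⟩, fun v => ?_⟩
    · rintro ⟨v, hv⟩ j
      exact (hr v j).trans ((f v _).2.2.2 (hv v) j)
    · exact IdFam.ext (funext (hr v)).symm ⟨fun h => ⟨v, fun _ => h⟩, fun h => h.2 v⟩

section Eliminator

def isFib.transport {Γ : Type} {B : Γ → Type} (β : isFib i0 i1 cof B) (q : I → Γ) {φ : Prop}
    (hφ : cof φ) {y : Γ} (h0 : q i0 = y) (hconst : φ → ∀ i, q i = y) (b : B y) : B (q i1) :=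
  (β false q φ hφ (fun v i => cast (congrArg B (hconst v i)).symm b)
    (cast (congrArg B h0).symm b) fun _ => rfl).1

theorem isFib.cast_transport_of_cof {Γ : Type} {B : Γ → Type} (β : isFib i0 i1 cof B)
    (q : I → Γ) {φ : Prop} (hφ : cof φ) {y : Γ} (h0 : q i0 = y) (hconst : φ → ∀ i, q i = y)
    (b : B y) (h1 : q i1 = y) (v : φ) :
    cast (congrArg B h1) (β.transport q hφ h0 hconst b) = b := by
  rw [isFib.transport, ← (β false q φ hφ _ _ _).2 v]
  exact (cast_cast _ _ b).trans (cast_eq _ b)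

variable {Γ : Type} {A : Γ → Type} {x : Γ} {a0 a1 : A x} (cnx : I → I → I)
  (ax3 : ∀ x, cnx i0 x = i0 ∧ cnx x i0 = i0 ∧ cnx i1 x = x ∧ cnx x i1 = x)
  (cof_eq_i0 : ∀ i : I, cof (i = i0)) (ax6 : ∀ φ ψ : Prop, cof φ → cof ψ → cof (φ ∨ ψ))
  (e : IdFam i0 i1 cof A ⟨x, (a0, a1)⟩)

def IdFam.contr (i : I) : Σ a : A x, IdFam i0 i1 cof A ⟨x, (a0, a)⟩ :=
  ⟨e.1.1 i,
    ⟨⟨fun j => e.1.1 (cnx i j), (congrArg e.1.1 (ax3 i).2.1).trans e.1.2.1,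
        congrArg e.1.1 (ax3 i).2.2.2⟩,
      ⟨i = i0 ∨ e.2.1, ax6 _ _ (cof_eq_i0 i) e.2.2.1, fun h j => h.elim
        (fun h => h ▸ (congrArg e.1.1 (ax3 j).1).trans e.1.2.1) (fun v => e.2.2.2 v (cnx i j))⟩⟩⟩

theorem IdFam.contr_zero (hT : cof True) :
    IdFam.contr cnx ax3 cof_eq_i0 ax6 e i0 = ⟨a0, reflId i0 i1 cof hT x a0⟩ :=
  IdFam.sigma_ext e.1.2.1 (funext fun j => (congrArg e.1.1 (ax3 j).1).trans e.1.2.1)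
    ⟨fun _ => trivial, fun _ => Or.inl rfl⟩

theorem IdFam.contr_of_cof (hT : cof True) (v : e.2.1) (i : I) :
    IdFam.contr cnx ax3 cof_eq_i0 ax6 e i = ⟨a0, reflId i0 i1 cof hT x a0⟩ :=
  IdFam.sigma_ext (e.2.2.2 v i) (funext fun j => e.2.2.2 v (cnx i j))
    ⟨fun _ => trivial, fun _ => Or.inr v⟩

theorem IdFam.contr_one (ax2 : i0 ≠ i1) : IdFam.contr cnx ax3 cof_eq_i0 ax6 e i1 = ⟨a1, e⟩ :=
  IdFam.sigma_ext e.1.2.2 (funext fun j => congrArg e.1.1 (ax3 j).2.2.1)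
    ⟨fun h => h.elim (fun h => absurd h.symm ax2) id, Or.inr⟩

end Eliminator

def J (hT : cof True) (ax2 : i0 ≠ i1) (cnx : I → I → I)
    (ax3 : ∀ x, cnx i0 x = i0 ∧ cnx x i0 = i0 ∧ cnx i1 x = x ∧ cnx x i1 = x)
    (cof_eq_i0 : ∀ i : I, cof (i = i0)) (ax6 : ∀ φ ψ : Prop, cof φ → cof ψ → cof (φ ∨ ψ))
    (Γ : Type) (A : Γ → Type) (x : Γ) (a0 : A x)
    (B : (Σ a : A x, IdFam i0 i1 cof A ⟨x, (a0, a)⟩) → Type) (β : isFib i0 i1 cof B)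
    (a1 : A x) (e : IdFam i0 i1 cof A ⟨x, (a0, a1)⟩) (b : B ⟨a0, reflId i0 i1 cof hT x a0⟩) :
    B ⟨a1, e⟩ :=
  cast (congrArg B (IdFam.contr_one cnx ax3 cof_eq_i0 ax6 e ax2))
    (β.transport (IdFam.contr cnx ax3 cof_eq_i0 ax6 e) e.2.2.1
      (IdFam.contr_zero cnx ax3 cof_eq_i0 ax6 e hT)
      (IdFam.contr_of_cof cnx ax3 cof_eq_i0 ax6 e hT) b)

theorem J_refl (hT : cof True) (ax2 : i0 ≠ i1) (cnx : I → I → I)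
    (ax3 : ∀ x, cnx i0 x = i0 ∧ cnx x i0 = i0 ∧ cnx i1 x = x ∧ cnx x i1 = x)
    (cof_eq_i0 : ∀ i : I, cof (i = i0)) (ax6 : ∀ φ ψ : Prop, cof φ → cof ψ → cof (φ ∨ ψ))
    (Γ : Type) (A : Γ → Type) (x : Γ) (a0 : A x)
    (B : (Σ a : A x, IdFam i0 i1 cof A ⟨x, (a0, a)⟩) → Type) (β : isFib i0 i1 cof B)
    (b : B ⟨a0, reflId i0 i1 cof hT x a0⟩) :
    J hT ax2 cnx ax3 cof_eq_i0 ax6 Γ A x a0 B β a0 (reflId i0 i1 cof hT x a0) b = b :=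
  β.cast_transport_of_cof _ _ _ _ b (IdFam.contr_one cnx ax3 cof_eq_i0 ax6 _ ax2) trivial

theorem fib_id_general (i0 i1 : I) (cof : Prop → Prop)
    (ax2 : i0 ≠ i1)
    (cnx : I → I → I)
    (ax3 : ∀ x, cnx i0 x = i0 ∧ cnx x i0 = i0 ∧ cnx i1 x = x ∧ cnx x i1 = x)
    (ax5 : ∀ i : I, cof (i = i0) ∧ cof (i = i1))
    (ax6 : ∀ φ ψ : Prop, cof φ → cof ψ → cof (φ ∨ ψ))
    (ax7 : ∀ φ ψ : Prop, cof φ → (φ → cof ψ) → cof (φ ∧ ψ)) :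
    ∃ hT : cof True,
    ∃ _isFibId : {Γ : Type} → {A : Γ → Type} →
        isFib i0 i1 cof A → isFib i0 i1 cof (IdFam i0 i1 cof A),
    ∃ J : (Γ : Type) → (A : Γ → Type) → (x : Γ) → (a0 : A x) →
        (B : (Σ a : A x, IdFam i0 i1 cof A ⟨x, (a0, a)⟩) → Type) →
        isFib i0 i1 cof B → (a1 : A x) → (e : IdFam i0 i1 cof A ⟨x, (a0, a1)⟩) →
        B ⟨a0, reflId i0 i1 cof hT x a0⟩ → B ⟨a1, e⟩,
      ∀ (Γ : Type) (A : Γ → Type) (x : Γ) (a0 : A x)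
        (B : (Σ a : A x, IdFam i0 i1 cof A ⟨x, (a0, a)⟩) → Type)
        (β : isFib i0 i1 cof B) (b : B ⟨a0, reflId i0 i1 cof hT x a0⟩),
        J Γ A x a0 B β a0 (reflId i0 i1 cof hT x a0) b = b := by
  have hT : cof True := eq_true (rfl : i0 = i0) ▸ (ax5 i0).1
  have cof_eq_i0 : ∀ i : I, cof (i = i0) := fun i => (ax5 i).1
  exact ⟨hT, fun α => α.idFam ax2 ax5 ax6 ax7, J hT ax2 cnx ax3 cof_eq_i0 ax6,
    J_refl hT ax2 cnx ax3 cof_eq_i0 ax6⟩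

/-- Identity types: the families `IdFam` are fibrant and support the Martin-Löf
identity eliminator `J` with a definitional computation rule. -/
theorem fib_id (i0 i1 : I) (cof : Prop → Prop)
    (ax2 : i0 ≠ i1)
    (cnx dsj : I → I → I)
    (ax3 : ∀ x, cnx i0 x = i0 ∧ cnx x i0 = i0 ∧ cnx i1 x = x ∧ cnx x i1 = x)
    (ax4 : ∀ x, dsj i0 x = x ∧ dsj x i0 = x ∧ dsj i1 x = i1 ∧ dsj x i1 = i1)
    (ax5 : ∀ i : I, cof (i = i0) ∧ cof (i = i1))
    (ax6 : ∀ φ ψ : Prop, cof φ → cof ψ → cof (φ ∨ ψ))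
    (ax7 : ∀ φ ψ : Prop, cof φ → (φ → cof ψ) → cof (φ ∧ ψ)) :
    ∃ hT : cof True,
    ∃ _isFibId : {Γ : Type} → {A : Γ → Type} →
        isFib i0 i1 cof A → isFib i0 i1 cof (IdFam i0 i1 cof A),
    ∃ J : (Γ : Type) → (A : Γ → Type) → (x : Γ) → (a0 : A x) →
        (B : (Σ a : A x, IdFam i0 i1 cof A ⟨x, (a0, a)⟩) → Type) →
        isFib i0 i1 cof B → (a1 : A x) → (e : IdFam i0 i1 cof A ⟨x, (a0, a1)⟩) →
        B ⟨a0, reflId i0 i1 cof hT x a0⟩ → B ⟨a1, e⟩,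
      ∀ (Γ : Type) (A : Γ → Type) (x : Γ) (a0 : A x)
        (B : (Σ a : A x, IdFam i0 i1 cof A ⟨x, (a0, a)⟩) → Type)
        (β : isFib i0 i1 cof B) (b : B ⟨a0, reflId i0 i1 cof hT x a0⟩),
        J Γ A x a0 B β a0 (reflId i0 i1 cof hT x a0) b = b :=
  fib_id_general i0 i1 cof ax2 cnx ax3 ax5 ax6 ax7

end CCHM
end

section
/- For every Γ : Type and A : Γ → Type: (i) from an extension structure ε : Ext A one can construct both a fibration structure in isFib A and a pointwise contractibility structure (x : Γ) → Contr (A x); (ii) conversely, from a fibration structure α : isFib A and a pointwise contractibility structure (x : Γ) → Contr (A x) one can construct an extension structure ε : Ext A. -/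
namespace CCHM

variable {I : Type}

/-- Contractibility structure. -/
def Contr (i0 i1 : I) (X : Type) : Type :=
  Σ x0 : X, (x : X) → PathT i0 i1 X x0 x

/-- Extension structure: every cofibrant partial element extends to a total one. -/
def Ext (cof : Prop → Prop) (X : Type) : Type :=
  (φ : Prop) → cof φ → (f : φ → X) → { x : X // ∀ u : φ, f u = x }

/-
An extension structure on `X` contracts it: the centre extends the empty partial element
(`i0 = i1` is false), and the path to `a` extends `a` along the cofibration `i = i1`, which at
`i0` is again the empty partial element. Composition in a family with extension structures just
extends at the far endpoint. Conversely, a partial element `(φ, f)` of a contractible fibre is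
extended by composing over the constant path the contraction paths from the centre to each `f u`.
-/

section

variable {i0 i1 : I} {cof : Prop → Prop} {X : Type}

theorem Ext.extend_eq_of_not (ε : Ext cof X) {φ : Prop} (hφ : cof φ) (hnot : ¬φ)
    (f g : φ → X) : (ε φ hφ f).1 = (ε φ hφ g).1 :=
  congrArg (fun h => (ε φ hφ h).1) (funext fun u => (hnot u).elim)

def Ext.toContr (ε : Ext cof X) (h01 : i0 ≠ i1) (hcof : ∀ i : I, cof (i = i1)) :
    Contr i0 i1 X :=
  ⟨(ε (i0 = i1) (hcof i0) fun u => (h01 u).elim).1, fun a =>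
    ⟨fun i => (ε (i = i1) (hcof i) fun _ => a).1,
      ε.extend_eq_of_not (hcof i0) h01 _ _, ((ε (i1 = i1) (hcof i1) fun _ => a).2 rfl).symm⟩⟩

def Comp.ofExt (e : Bool) {A : I → Type} (ε : Ext cof (A (pt i0 i1 (!e)))) :
    Comp i0 i1 cof e A :=
  fun φ hφ f _ _ => ε φ hφ fun u => f u (pt i0 i1 (!e))

def isFib.ofExt {Γ : Type} {A : Γ → Type} (ε : (x : Γ) → Ext cof (A x)) :
    isFib i0 i1 cof A :=
  fun e p => Comp.ofExt e (ε (p (pt i0 i1 (!e))))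

def Ext.ofCompOfContr (c : Comp i0 i1 cof false fun _ => X) (κ : Contr i0 i1 X) : Ext cof X :=
  fun φ hφ f =>
    let path u := κ.2 (f u)
    let ⟨a, ha⟩ := c φ hφ (fun u => (path u).1) κ.1 fun u => (path u).2.1
    ⟨a, fun u => (path u).2.2.symm.trans (ha u)⟩

end

/-- Extension structures on a family correspond exactly to having both a fibration
structure and a pointwise contractibility structure. -/
theorem ext_iff_fib_and_contr (i0 i1 : I) (cof : Prop → Prop)
    (ax2 : i0 ≠ i1)
    (ax5 : ∀ i : I, cof (i = i0) ∧ cof (i = i1))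
    (Γ : Type) (A : Γ → Type) :
    Nonempty
      ((((x : Γ) → Ext cof (A x)) →
          isFib i0 i1 cof A × ((x : Γ) → Contr i0 i1 (A x))) ×
        (isFib i0 i1 cof A → ((x : Γ) → Contr i0 i1 (A x)) →
          (x : Γ) → Ext cof (A x))) :=
  ⟨(fun ε => (isFib.ofExt ε, fun x => (ε x).toContr ax2 fun i => (ax5 i).2),
    fun α κ x => Ext.ofCompOfContr (α false fun _ => x) (κ x))⟩

end CCHM
end

section
/- Given Γ : Type, Φ : Γ → Prop with cof (Φ x) for all x, A : Γ|Φ → Type, B : Γ → Type, f : (x : Γ) → (u : [Φ x]) → A ⟨x, u⟩ → B x, a family of equivalence structures eq : (x : Γ) → (u : [Φ x]) → Equiv (f x u), and fibration structures α : isFib A and β : isFib B, there exists a family G : Γ → Type such that: (i) G x = A ⟨x, u⟩ for every x : Γ and u : [Φ x]; (ii) for every x : Γ there is a bijection G x ≃ Glue Φ A B f x; and (iii) G carries a fibration structure in isFib G. -/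
/-!
For `u : Φ x` the map `a ↦ (fun _ => a, f x u a)` is a bijection `A ⟨x, u⟩ ≃ Glue x`, so the
strictification axiom `ax9` yields `G` with `G x = A ⟨x, u⟩` and `G x ≃ Glue x`. Composition
transfers along bijections, so it remains to compose in `Glue`. Compose the `B`-components to
some `b`; over `Φ` at the target, the given `A`-components form a partial element of the fibre of
`f` over `b`, which is contractible and, by filling with connections, fibrant, hence the partial
element extends; a last composition along the resulting fibre paths moves `b` to a value that
agrees with `f` on the new `A`-component.
-/

namespace CCHM

variable {I : Type}

/-- Equivalence structure on a function: all its path-fibres are contractible. -/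
def EquivStr (i0 i1 : I) {X Y : Type} (f : X → Y) : Type :=
  (y : Y) → Contr i0 i1 (Σ x : X, PathT i0 i1 Y (f x) y)

/-- The glueing of a cofibrant-partial family `A` onto a total family `B`
along `f`. -/
def GlueFam (Γ : Type) (Φ : Γ → Prop) (A : { x : Γ // Φ x } → Type) (B : Γ → Type)
    (f : (x : Γ) → (u : Φ x) → A ⟨x, u⟩ → B x) : Γ → Type :=
  fun x => Σ a : (u : Φ x) → A ⟨x, u⟩, { b : B x // ∀ u, f x u (a u) = b }

/-- Composition as a proposition. Only `Nonempty (isFib …)` is asked for, so it suffices that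
composites exist; choice then assembles a composition structure. -/
def WComp (i0 i1 : I) (cof : Prop → Prop) (e : Bool) (A : I → Type) : Prop :=
  ∀ (φ : Prop), cof φ → ∀ (f : φ → (i : I) → A i) (a0 : A (pt i0 i1 e)),
    (∀ u : φ, f u (pt i0 i1 e) = a0) →
    ∃ a1 : A (pt i0 i1 (!e)), ∀ u : φ, f u (pt i0 i1 (!e)) = a1

abbrev Fiber (i0 i1 : I) {X Y : Type} (f : X → Y) (y : Y) : Type :=
  Σ x : X, PathT i0 i1 Y (f x) y

/-- Each endpoint carries a connection `m` contracting `I` onto it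
(`cnx` for `i0`, `dsj` for `i1`). -/
structure IntervalAxioms (i0 i1 : I) (cof : Prop → Prop) : Prop where
  ne : i0 ≠ i1
  conn : ∀ e, ∃ m : I → I → I, (∀ i, m (pt i0 i1 e) i = pt i0 i1 e) ∧ ∀ i, m (pt i0 i1 (!e)) i = i
  cof_eq_pt : ∀ i e, cof (i = pt i0 i1 e)
  cof_or : ∀ φ ψ, cof φ → cof ψ → cof (φ ∨ ψ)

section Composition

variable {i0 i1 : I} {cof : Prop → Prop}

theorem Comp.wcomp {e : Bool} {A : I → Type} (c : Comp i0 i1 cof e A) : WComp i0 i1 cof e A :=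
  fun φ cφ f a0 h => ⟨(c φ cφ f a0 h).1, (c φ cφ f a0 h).2⟩

theorem WComp.of_equiv {e : Bool} {H K : I → Type} (iso : ∀ i, H i ≃ K i)
    (w : WComp i0 i1 cof e H) : WComp i0 i1 cof e K := by
  intro φ cφ f a0 h
  obtain ⟨a1, ha1⟩ := w φ cφ (fun v i => (iso i).symm (f v i)) ((iso _).symm a0)
    (fun v => congrArg (iso _).symm (h v))
  exact ⟨iso _ a1, fun v => by rw [← ha1 v, Equiv.apply_symm_apply]⟩

theorem nonempty_isFib_of_wcomp {Γ : Type} {A : Γ → Type}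
    (w : ∀ e (p : I → Γ), WComp i0 i1 cof e fun i => A (p i)) :
    Nonempty (isFib i0 i1 cof A) :=
  ⟨fun e p φ cφ f a0 h => ⟨(w e p φ cφ f a0 h).choose, (w e p φ cφ f a0 h).choose_spec⟩⟩

/-- In a constant family, composing along `j ↦ h v (m j i)` for every `i`, with `m` the
connection at `e`, fills the open box `h` starting from `x0`. -/
theorem IntervalAxioms.exists_fill_const (hI : IntervalAxioms i0 i1 cof) {X : Type} {e : Bool}
    (hX : WComp i0 i1 cof e fun _ => X) {φ : Prop} (cφ : cof φ) (h : φ → I → X) (x0 : X)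
    (hx0 : ∀ v, h v (pt i0 i1 e) = x0) :
    ∃ x : I → X, x (pt i0 i1 e) = x0 ∧ ∀ v i, h v i = x i := by
  classical
  obtain ⟨m, hm_e, hm_ne⟩ := hI.conn e
  choose x hx using fun i => hX (φ ∨ i = pt i0 i1 e) (hI.cof_or _ _ cφ (hI.cof_eq_pt i e))
    (fun _ j => if v : φ then h v (m j i) else x0) x0
    (fun _ => by dsimp only; split_ifs with v <;> simp only [hm_e, hx0])
  refine ⟨x, ?_, fun v i => ?_⟩
  · rw [← hx _ (.inr rfl)]
    dsimp only
    split_ifs with v <;> simp only [hm_ne, hx0]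
  · rw [← hx i (.inl v), dif_pos v, hm_ne]

theorem IntervalAxioms.wcomp_fiber (hI : IntervalAxioms i0 i1 cof) {X Y : Type} {e : Bool}
    (hX : WComp i0 i1 cof e fun _ => X) (hY : WComp i0 i1 cof e fun _ => Y) (f : X → Y) (y : Y) :
    WComp i0 i1 cof e fun _ => Fiber i0 i1 f y := by
  classical
  intro φ cφ h z0 hz0
  obtain ⟨x, hx_e, hx⟩ := hI.exists_fill_const hX cφ (fun v i => (h v i).1) z0.1
    (fun v => congrArg Sigma.fst (hz0 v))
  -- a tube in `Y` with ends `f ∘ x` and `y`, and sides the paths of `h` over `φ`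
  let tube (j : I) (w : (j = i0 ∨ j = i1) ∨ φ) (i : I) : Y :=
    if hj0 : j = i0 then f (x i) else if hj1 : j = i1 then y
    else (h (w.resolve_left fun c => c.elim hj0 hj1) i).2.1 j
  have tube_side : ∀ j w (v : φ) i, tube j w i = (h v i).2.1 j := by
    intro j w v i
    simp only [tube]
    split_ifs with hj0 hj1
    · rw [hj0, (h v i).2.2.1, hx v]
    · rw [hj1, (h v i).2.2.2]
    · rfl
  have tube_e : ∀ j w, tube j w (pt i0 i1 e) = z0.2.1 j := by
    intro j w
    simp only [tube]
    split_ifs with hj0 hj1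
    · rw [hj0, hx_e, z0.2.2.1]
    · rw [hj1, z0.2.2.2]
    · rw [hz0]
  choose q hq using fun j => hY _ (hI.cof_or _ _ (hI.cof_or _ _ (hI.cof_eq_pt j false)
    (hI.cof_eq_pt j true)) cφ) (tube j) (z0.2.1 j) (tube_e j)
  refine ⟨⟨x (pt i0 i1 (!e)), q, ?_, ?_⟩, fun v => Sigma.subtype_ext (hx v _)
    (funext fun j => (tube_side j (.inr v) v _).symm.trans (hq j (.inr v)))⟩
  · rw [← hq i0 (.inl (.inl rfl))]
    simp only [tube, dif_pos]
  · rw [← hq i1 (.inl (.inr rfl))]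
    simp only [tube, dif_neg hI.ne.symm, dif_pos]

/-- Contract each `a v` to the centre and compose the resulting paths. -/
theorem Contr.exists_extend {X : Type} (hX : WComp i0 i1 cof false fun _ => X)
    (c : Contr i0 i1 X) {φ : Prop} (cφ : cof φ) (a : φ → X) : ∃ x, ∀ v, a v = x := by
  obtain ⟨x, hx⟩ := hX φ cφ (fun v => (c.2 (a v)).1) c.1 (fun v => (c.2 (a v)).2.1)
  exact ⟨x, fun v => (c.2 (a v)).2.2.symm.trans (hx v)⟩

end Composition

section Glue

variable {i0 i1 : I} {cof : Prop → Prop} {Γ : Type} {Φ : Γ → Prop}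
  {A : { x : Γ // Φ x } → Type} {B : Γ → Type} {f : (x : Γ) → (u : Φ x) → A ⟨x, u⟩ → B x}

def glueEquiv (x : Γ) (u : Φ x) : A ⟨x, u⟩ ≃ GlueFam Γ Φ A B f x where
  toFun a := ⟨fun _ => a, f x u a, fun _ => rfl⟩
  invFun g := g.1 u
  left_inv _ := rfl
  right_inv g := Sigma.subtype_ext rfl (g.2.2 u)

theorem IntervalAxioms.glue_extend (hI : IntervalAxioms i0 i1 cof) {x : Γ} (hΦ : cof (Φ x))
    (hA : ∀ u, WComp i0 i1 cof false fun _ => A ⟨x, u⟩)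
    (hB : ∀ e, WComp i0 i1 cof e fun _ => B x) (eq : ∀ u, EquivStr i0 i1 (f x u))
    {φ : Prop} (cφ : cof φ) (g : φ → GlueFam Γ Φ A B f x) (b : B x)
    (hb : ∀ v, (g v).2.1 = b) : ∃ g', ∀ v, g v = g' := by
  classical
  have hfib : ∀ u, ∃ z : Fiber i0 i1 (f x u) b, ∀ v, (g v).1 u = z.1 ∧ z.2.1 = fun _ => b := by
    intro u
    obtain ⟨z, hz⟩ := (eq u b).exists_extend (hI.wcomp_fiber (hA u) (hB false) (f x u) b) cφ
      fun v => ⟨(g v).1 u, fun _ => b, (((g v).2.2 u).trans (hb v)).symm, rfl⟩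
    exact ⟨z, fun v => ⟨congrArg Sigma.fst (hz v), (congrArg (fun z => z.2.1) (hz v)).symm⟩⟩
  choose z hz using hfib
  obtain ⟨b', hb'⟩ := hB true (Φ x ∨ φ) (hI.cof_or _ _ hΦ cφ)
    (fun _ i => if u : Φ x then (z u).2.1 i else b) b
    (fun _ => by dsimp only [pt, cond]; split_ifs with u; exacts [(z u).2.2.2, rfl])
  refine ⟨⟨fun u => (z u).1, b', fun u => ?_⟩,
    fun v => Sigma.subtype_ext (funext fun u => (hz u v).1) ?_⟩
  · rw [← hb' (.inl u), dif_pos u]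
    exact (z u).2.2.1.symm
  · show (g v).2.1 = b'
    rw [hb v, ← hb' (.inr v)]
    dsimp only
    split_ifs with u
    · rw [(hz u v).2]
    · rfl

theorem IntervalAxioms.wcomp_glue (hI : IntervalAxioms i0 i1 cof) (hΦ : ∀ x, cof (Φ x))
    (eq : (x : Γ) → (u : Φ x) → EquivStr i0 i1 (f x u))
    (α : isFib i0 i1 cof A) (β : isFib i0 i1 cof B) (e : Bool) (p : I → Γ) :
    WComp i0 i1 cof e fun i => GlueFam Γ Φ A B f (p i) := by
  intro φ cφ g g0 hg0
  obtain ⟨b, hb⟩ := β e p φ cφ (fun v i => (g v i).2.1) g0.2.1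
    (fun v => congrArg (fun t => t.2.1) (hg0 v))
  exact hI.glue_extend (hΦ _) (fun u => (α false fun _ => ⟨_, u⟩).wcomp)
    (fun e' => (β e' fun _ => _).wcomp) (eq _) cφ (fun v => g v _) b hb

end Glue

/-- Strict glueing: there is a family `G` strictly extending the partial family
`A`, isomorphic to the glueing `Glue Φ A B f`, and carrying a fibration
structure. -/
theorem strict_glue (i0 i1 : I) (cof : Prop → Prop)
    (ax2 : i0 ≠ i1)
    (cnx dsj : I → I → I)
    (ax3 : ∀ x, cnx i0 x = i0 ∧ cnx x i0 = i0 ∧ cnx i1 x = x ∧ cnx x i1 = x)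
    (ax4 : ∀ x, dsj i0 x = x ∧ dsj x i0 = x ∧ dsj i1 x = i1 ∧ dsj x i1 = i1)
    (ax5 : ∀ i : I, cof (i = i0) ∧ cof (i = i1))
    (ax6 : ∀ φ ψ : Prop, cof φ → cof ψ → cof (φ ∨ ψ))
    (ax9 : ∀ (φ : Prop), cof φ → ∀ (A : φ → Type) (B : Type)
      (s : (u : φ) → A u ≃ B),
      ∃ (B' : Type) (s' : B' ≃ B), ∀ u : φ, ∃ _h : A u = B', HEq (s u) s')
    (Γ : Type) (Φ : Γ → Prop) (hΦ : ∀ x, cof (Φ x))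
    (A : { x : Γ // Φ x } → Type) (B : Γ → Type)
    (f : (x : Γ) → (u : Φ x) → A ⟨x, u⟩ → B x)
    (eq : (x : Γ) → (u : Φ x) → EquivStr i0 i1 (f x u))
    (α : isFib i0 i1 cof A) (β : isFib i0 i1 cof B) :
    ∃ G : Γ → Type,
      (∀ (x : Γ) (u : Φ x), G x = A ⟨x, u⟩) ∧
      (∀ x : Γ, Nonempty (G x ≃ GlueFam Γ Φ A B f x)) ∧
      Nonempty (isFib i0 i1 cof G) := by
  have hI : IntervalAxioms i0 i1 cof :=
    { ne := ax2
      conn := fun e => by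
        cases e
        exacts [⟨cnx, fun i => (ax3 i).1, fun i => (ax3 i).2.2.1⟩,
          ⟨dsj, fun i => (ax4 i).2.2.1, fun i => (ax4 i).1⟩]
      cof_eq_pt := fun i e => by cases e; exacts [(ax5 i).1, (ax5 i).2]
      cof_or := ax6 }
  choose G iso hGA using fun x =>
    ax9 (Φ x) (hΦ x) (fun u => A ⟨x, u⟩) (GlueFam Γ Φ A B f x) (glueEquiv x)
  refine ⟨G, fun x u => (hGA x u).fst.symm, fun x => ⟨iso x⟩, ?_⟩
  exact nonempty_isFib_of_wcomp fun e p =>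
    (hI.wcomp_glue hΦ eq α β e p).of_equiv fun i => (iso (p i)).symm

end CCHM
end

section
/- For every Γ : Type and every family P : Γ × I → Type with fibration structure ρ : isFib P, define f : (x : Γ) → P (x, i0) → P (x, i1) by f x a := ρ i0 (fun i => (x, i)) False elim a (composition along the path i ↦ (x, i) from the empty cofibrant partial path, where cof False follows from (ax2) and (ax5)). Then there is an equivalence structure (x : Γ) → Equiv (f x). -/
/-!
Each fibre `Σ a, transport a ⇝ y` of the transport map has an extension structure: every
cofibrant partial element of it extends to a total one, and a type with an extension structure is
contractible (extend the empty partial element to get a centre `x0`, and the element that is `x0`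
on `s = i0` and `x` on `s = i1` to get a path from `x0` to `x`).

To extend `g : φ → Fiber y`, turn each `(a, p) = g u` into a path over `A` from `a` to `y`: the
bottom side of a square filled backwards from `p`, whose other sides are the transport filler of
`a` and the constant path at `y`. Gluing these paths by filling backwards from `y` gives a path
over `A` whose value at `i0` is the new point; composing forward along `join j` through the squares
gives the new path from its transport to `y`.
-/

namespace CCHM

variable {I : Type}

theorem isFib.comp_congr {i0 i1 : I} {cof : Prop → Prop} {Γ : Type} {A : Γ → Type}
    (α : isFib i0 i1 cof A) (e : Bool) {p p' : I → Γ} (hp : ∀ i, p i = p' i)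
    {φ φ' : Prop} (hφφ' : φ ↔ φ') (hφ : cof φ) (hφ' : cof φ')
    {f : φ → (i : I) → A (p i)} {f' : φ' → (i : I) → A (p' i)}
    (hf : ∀ u u' i, f u i ≍ f' u' i) {a0 : A (p (pt i0 i1 e))} {a0' : A (p' (pt i0 i1 e))}
    (ha : a0 ≍ a0') (h : ∀ u, f u (pt i0 i1 e) = a0) (h' : ∀ u, f' u (pt i0 i1 e) = a0') :
    (α e p φ hφ f a0 h).1 ≍ (α e p' φ' hφ' f' a0' h').1 := by
  obtain rfl : p = p' := funext hp
  obtain rfl : φ = φ' := propext hφφ'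
  obtain rfl : f = f' := funext fun u => funext fun i => eq_of_heq (hf u u i)
  obtain rfl := eq_of_heq ha
  rfl

structure Interval (I : Type) where
  i0 : I
  i1 : I
  cof : Prop → Prop
  meet : I → I → I
  join : I → I → I
  zero_ne_one : i0 ≠ i1
  meet_spec : ∀ x, meet i0 x = i0 ∧ meet x i0 = i0 ∧ meet i1 x = x ∧ meet x i1 = x
  join_spec : ∀ x, join i0 x = x ∧ join x i0 = x ∧ join i1 x = i1 ∧ join x i1 = i1
  cof_eq : ∀ i : I, cof (i = i0) ∧ cof (i = i1)
  cof_or : ∀ φ ψ : Prop, cof φ → cof ψ → cof (φ ∨ ψ)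

namespace Interval

open Classical

variable (𝕀 : Interval I)

abbrev endpoint (e : Bool) : I := pt 𝕀.i0 𝕀.i1 e

abbrev IsFib {Γ : Type} (A : Γ → Type) : Type := isFib 𝕀.i0 𝕀.i1 𝕀.cof A

abbrev OnBoundary (i : I) : Prop := i = 𝕀.i0 ∨ i = 𝕀.i1

theorem cof_false : 𝕀.cof False := by
  simpa [𝕀.zero_ne_one] using (𝕀.cof_eq 𝕀.i0).2

theorem cof_onBoundary (i : I) : 𝕀.cof (𝕀.OnBoundary i) :=
  𝕀.cof_or _ _ (𝕀.cof_eq i).1 (𝕀.cof_eq i).2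

theorem cof_eq_endpoint (j : I) : ∀ e, 𝕀.cof (j = 𝕀.endpoint e)
  | false => (𝕀.cof_eq j).1
  | true => (𝕀.cof_eq j).2

theorem endpoint_not_ne : ∀ e, 𝕀.endpoint (!e) ≠ 𝕀.endpoint e
  | false => 𝕀.zero_ne_one.symm
  | true => 𝕀.zero_ne_one

theorem zero_join (x : I) : 𝕀.join 𝕀.i0 x = x := (𝕀.join_spec x).1
theorem join_zero (x : I) : 𝕀.join x 𝕀.i0 = x := (𝕀.join_spec x).2.1
theorem one_join (x : I) : 𝕀.join 𝕀.i1 x = 𝕀.i1 := (𝕀.join_spec x).2.2.1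
theorem join_one (x : I) : 𝕀.join x 𝕀.i1 = 𝕀.i1 := (𝕀.join_spec x).2.2.2

/-- `conn e j` is a path from `endpoint e` to `j`; it is constant for `j = endpoint e` and the
identity for `j = endpoint !e`. -/
def conn : Bool → I → I → I
  | false => 𝕀.meet
  | true => 𝕀.join

theorem conn_apply_endpoint (j : I) : ∀ e, 𝕀.conn e j (𝕀.endpoint e) = 𝕀.endpoint e
  | false => (𝕀.meet_spec j).2.1
  | true => 𝕀.join_one j

theorem conn_apply_endpoint_not (j : I) : ∀ e, 𝕀.conn e j (𝕀.endpoint !e) = j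
  | false => (𝕀.meet_spec j).2.2.2
  | true => 𝕀.join_zero j

theorem conn_endpoint (i : I) : ∀ e, 𝕀.conn e (𝕀.endpoint e) i = 𝕀.endpoint e
  | false => (𝕀.meet_spec i).1
  | true => 𝕀.one_join i

theorem conn_endpoint_not (i : I) : ∀ e, 𝕀.conn e (𝕀.endpoint !e) i = i
  | false => (𝕀.meet_spec i).2.2.1
  | true => 𝕀.zero_join i

section Fill

variable {A : I → Type} (α : 𝕀.IsFib A) (e : Bool) {φ : Prop} (hφ : 𝕀.cof φ)
  (f : φ → (i : I) → A i) (a0 : A (𝕀.endpoint e))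

noncomputable def fillTube (j : I) : φ ∨ j = 𝕀.endpoint e → (i : I) → A (𝕀.conn e j i) :=
  fun u => u.by_cases (fun v i => f v (𝕀.conn e j i))
    (fun hj i => cast (congrArg A (by rw [hj, 𝕀.conn_endpoint])) a0)

theorem fillTube_endpoint (hf : ∀ u, f u (𝕀.endpoint e) = a0) (j : I)
    (u : φ ∨ j = 𝕀.endpoint e) :
    𝕀.fillTube e f a0 j u (𝕀.endpoint e) =
      cast (congrArg A (𝕀.conn_apply_endpoint j e).symm) a0 := by
  rw [eq_cast_iff_heq, fillTube, Or.by_cases]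
  split
  · exact (congr_arg_heq (f _) (𝕀.conn_apply_endpoint j e)).trans (heq_of_eq (hf _))
  · exact cast_heq _ _

variable (hf : ∀ u, f u (𝕀.endpoint e) = a0)

noncomputable def fillComp (j : I) :
    {a1 : A (𝕀.conn e j (𝕀.endpoint !e)) //
      ∀ u, 𝕀.fillTube e f a0 j u (𝕀.endpoint !e) = a1} :=
  α e (𝕀.conn e j) (φ ∨ j = 𝕀.endpoint e) (𝕀.cof_or _ _ hφ (𝕀.cof_eq_endpoint j e))
    (𝕀.fillTube e f a0 j) (cast (congrArg A (𝕀.conn_apply_endpoint j e).symm) a0)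
    (𝕀.fillTube_endpoint e f a0 hf j)

noncomputable def fill (j : I) : A j :=
  cast (congrArg A (𝕀.conn_apply_endpoint_not j e)) (𝕀.fillComp α e hφ f a0 hf j).1

theorem fill_endpoint : 𝕀.fill α e hφ f a0 hf (𝕀.endpoint e) = a0 := by
  rw [fill, ← (𝕀.fillComp α e hφ f a0 hf _).2 (Or.inr rfl), cast_eq_iff_heq, fillTube,
    Or.by_cases]
  split
  · exact (congr_arg_heq (f _) (𝕀.conn_endpoint _ e)).trans (heq_of_eq (hf _))
  · exact cast_heq _ _

theorem eq_fill (v : φ) (j : I) : f v j = 𝕀.fill α e hφ f a0 hf j := by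
  rw [fill, ← (𝕀.fillComp α e hφ f a0 hf j).2 (Or.inl v), eq_cast_iff_heq, fillTube,
    Or.by_cases, dif_pos v]
  exact (congr_arg_heq (f v) (𝕀.conn_apply_endpoint_not j e)).symm

theorem fill_endpoint_not :
    𝕀.fill α e hφ f a0 hf (𝕀.endpoint !e) = (α e (fun i => i) φ hφ f a0 hf).1 := by
  refine eq_of_heq ((cast_heq _ _).trans (isFib.comp_congr α e (𝕀.conn_endpoint_not · e)
    (or_iff_left (𝕀.endpoint_not_ne e)) _ hφ (fun u v i => ?_) (cast_heq _ _) _ hf))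
  rw [fillTube, Or.by_cases, dif_pos v]
  exact congr_arg_heq (f v) (𝕀.conn_endpoint_not i e)

end Fill

section Transport

variable {A : I → Type} (α : 𝕀.IsFib A)

def transport (a : A 𝕀.i0) : A 𝕀.i1 :=
  (α false (fun i => i) False 𝕀.cof_false (fun u => u.elim) a (fun u => u.elim)).1

noncomputable def transportFill (a : A 𝕀.i0) : (j : I) → A j :=
  𝕀.fill α false 𝕀.cof_false (fun u => u.elim) a (fun u => u.elim)

theorem transportFill_zero (a : A 𝕀.i0) : 𝕀.transportFill α a 𝕀.i0 = a :=
  𝕀.fill_endpoint α false _ _ _ _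

theorem transportFill_one (a : A 𝕀.i0) : 𝕀.transportFill α a 𝕀.i1 = 𝕀.transport α a :=
  𝕀.fill_endpoint_not α false _ _ _ _

end Transport

section Fiber

variable {A : I → Type} (α : 𝕀.IsFib A)

abbrev Fiber (y : A 𝕀.i1) : Type :=
  Σ a : A 𝕀.i0, PathT 𝕀.i0 𝕀.i1 (A 𝕀.i1) (𝕀.transport α a) y

theorem Fiber.ext {y : A 𝕀.i1} {z z' : 𝕀.Fiber α y} (h1 : z.1 = z'.1) (h2 : z.2.1 = z'.2.1) :
    z = z' := by
  obtain ⟨a, p⟩ := z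
  obtain ⟨a', p'⟩ := z'
  obtain rfl : a = a' := h1
  obtain rfl : p = p' := Subtype.ext h2
  rfl

noncomputable def squareTube (a : A 𝕀.i0) (y : A 𝕀.i1) (j : I) :
    𝕀.OnBoundary j → (k : I) → A (𝕀.join j k) :=
  fun u => u.by_cases
    (fun h0 k => cast (congrArg A (by rw [h0, 𝕀.zero_join])) (𝕀.transportFill α a k))
    (fun h1 k => cast (congrArg A (by rw [h1, 𝕀.one_join])) y)

theorem squareTube_zero_left (a : A 𝕀.i0) (y : A 𝕀.i1) (u : 𝕀.OnBoundary 𝕀.i0) (k : I) :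
    𝕀.squareTube α a y 𝕀.i0 u k ≍ 𝕀.transportFill α a k := by
  rw [squareTube, Or.by_cases, dif_pos rfl]
  exact cast_heq _ _

theorem squareTube_one_left (a : A 𝕀.i0) (y : A 𝕀.i1) (u : 𝕀.OnBoundary 𝕀.i1) (k : I) :
    𝕀.squareTube α a y 𝕀.i1 u k ≍ y := by
  rw [squareTube, Or.by_cases, dif_neg 𝕀.zero_ne_one.symm]
  exact cast_heq _ _

theorem squareTube_one_right {y : A 𝕀.i1} (z : 𝕀.Fiber α y) (j : I) (u : 𝕀.OnBoundary j) :
    𝕀.squareTube α z.1 y j u 𝕀.i1 = cast (congrArg A (𝕀.join_one j).symm) (z.2.1 j) := by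
  rw [eq_cast_iff_heq]
  obtain rfl | rfl := id u
  · exact (𝕀.squareTube_zero_left α _ _ _ _).trans
      (heq_of_eq ((𝕀.transportFill_one α z.1).trans z.2.2.1.symm))
  · exact (𝕀.squareTube_one_left α _ _ _ _).trans (heq_of_eq z.2.2.2.symm)

/-- A filler of the square whose sides `j = i0`, `j = i1` and `k = i1` are the transport filler
of `z.1`, the constant path at `y` and the path `z.2`; its side `k = i0` lies over `I`. -/
noncomputable def square {y : A 𝕀.i1} (z : 𝕀.Fiber α y) (j : I) : (k : I) → A (𝕀.join j k) :=
  𝕀.fill (reind 𝕀.i0 𝕀.i1 𝕀.cof (𝕀.join j) α) true (𝕀.cof_onBoundary j)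
    (𝕀.squareTube α z.1 y j)
    (cast (congrArg A (𝕀.join_one j).symm) (z.2.1 j)) (𝕀.squareTube_one_right α z j)

variable {y : A 𝕀.i1}

theorem square_one_right (z : 𝕀.Fiber α y) (j : I) : 𝕀.square α z j 𝕀.i1 ≍ z.2.1 j :=
  (heq_of_eq (𝕀.fill_endpoint _ true _ _ _ _)).trans (cast_heq _ _)

theorem square_zero_left (z : 𝕀.Fiber α y) (k : I) :
    𝕀.square α z 𝕀.i0 k ≍ 𝕀.transportFill α z.1 k :=
  (heq_of_eq (𝕀.eq_fill _ true _ _ _ _ (Or.inl rfl) k)).symm.trans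
    (𝕀.squareTube_zero_left α _ _ _ _)

theorem square_one_left (z : 𝕀.Fiber α y) (k : I) : 𝕀.square α z 𝕀.i1 k ≍ y :=
  (heq_of_eq (𝕀.eq_fill _ true _ _ _ _ (Or.inr rfl) k)).symm.trans
    (𝕀.squareTube_one_left α _ _ _ _)

noncomputable def pathOver (z : 𝕀.Fiber α y) (j : I) : A j :=
  cast (congrArg A (𝕀.join_zero j)) (𝕀.square α z j 𝕀.i0)

theorem pathOver_zero (z : 𝕀.Fiber α y) : 𝕀.pathOver α z 𝕀.i0 = z.1 := by
  rw [pathOver, cast_eq_iff_heq, ← 𝕀.transportFill_zero α z.1]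
  exact 𝕀.square_zero_left α z _

theorem pathOver_one (z : 𝕀.Fiber α y) : 𝕀.pathOver α z 𝕀.i1 = y :=
  cast_eq_iff_heq.mpr (𝕀.square_one_left α z _)

section Extension

variable {φ : Prop} (hφ : 𝕀.cof φ) (g : φ → 𝕀.Fiber α y)

noncomputable def gluePathOver : (j : I) → A j :=
  𝕀.fill α true hφ (fun u => 𝕀.pathOver α (g u)) y (fun u => 𝕀.pathOver_one α (g u))

theorem gluePathOver_one : 𝕀.gluePathOver α hφ g 𝕀.i1 = y :=
  𝕀.fill_endpoint α true _ _ _ _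

theorem pathOver_eq_gluePathOver (v : φ) (j : I) :
    𝕀.pathOver α (g v) j = 𝕀.gluePathOver α hφ g j :=
  𝕀.eq_fill α true hφ (fun u => 𝕀.pathOver α (g u)) y _ v j

theorem fst_eq_gluePathOver_zero (v : φ) : (g v).1 = 𝕀.gluePathOver α hφ g 𝕀.i0 :=
  (𝕀.pathOver_zero α (g v)).symm.trans (𝕀.pathOver_eq_gluePathOver α hφ g v 𝕀.i0)

noncomputable def glueTube (j : I) : φ ∨ 𝕀.OnBoundary j → (i : I) → A (𝕀.join j i) :=
  fun u => u.by_cases (fun v => 𝕀.square α (g v) j)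
    (𝕀.squareTube α (𝕀.gluePathOver α hφ g 𝕀.i0) y j)

theorem glueTube_zero (j : I) (u : φ ∨ 𝕀.OnBoundary j) :
    𝕀.glueTube α hφ g j u 𝕀.i0 =
      cast (congrArg A (𝕀.join_zero j).symm) (𝕀.gluePathOver α hφ g j) := by
  rw [eq_cast_iff_heq, glueTube, Or.by_cases]
  split
  · rw [← 𝕀.pathOver_eq_gluePathOver α hφ g ‹φ›]
    exact (cast_heq _ _).symm
  · obtain rfl | rfl := u.resolve_left ‹¬φ›
    · exact (𝕀.squareTube_zero_left α _ _ _ _).trans (heq_of_eq (𝕀.transportFill_zero α _))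
    · rw [𝕀.gluePathOver_one]
      exact 𝕀.squareTube_one_left α _ _ _ _

noncomputable def glueComp (j : I) :
    {a1 : A (𝕀.join j 𝕀.i1) // ∀ u, 𝕀.glueTube α hφ g j u 𝕀.i1 = a1} :=
  α false (𝕀.join j) (φ ∨ 𝕀.OnBoundary j) (𝕀.cof_or _ _ hφ (𝕀.cof_onBoundary j))
    (𝕀.glueTube α hφ g j) (cast (congrArg A (𝕀.join_zero j).symm) (𝕀.gluePathOver α hφ g j))
    (𝕀.glueTube_zero α hφ g j)

noncomputable def gluePath (j : I) : A 𝕀.i1 :=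
  cast (congrArg A (𝕀.join_one j)) (𝕀.glueComp α hφ g j).1

theorem gluePath_zero :
    𝕀.gluePath α hφ g 𝕀.i0 = 𝕀.transport α (𝕀.gluePathOver α hφ g 𝕀.i0) := by
  rw [gluePath, ← (𝕀.glueComp α hφ g _).2 (Or.inr (Or.inl rfl)), cast_eq_iff_heq, glueTube,
    Or.by_cases]
  split
  · exact (𝕀.square_one_right α _ _).trans (heq_of_eq
      ((g _).2.2.1.trans (congrArg _ (𝕀.fst_eq_gluePathOver_zero α hφ g _))))
  · exact (𝕀.squareTube_zero_left α _ _ _ _).trans (heq_of_eq (𝕀.transportFill_one α _))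

theorem gluePath_one : 𝕀.gluePath α hφ g 𝕀.i1 = y := by
  rw [gluePath, ← (𝕀.glueComp α hφ g _).2 (Or.inr (Or.inr rfl)), cast_eq_iff_heq, glueTube,
    Or.by_cases]
  split
  · exact (𝕀.square_one_right α _ _).trans (heq_of_eq (g _).2.2.2)
  · exact 𝕀.squareTube_one_left α _ _ _ _

theorem path_eq_gluePath (v : φ) (j : I) : (g v).2.1 j = 𝕀.gluePath α hφ g j := by
  rw [gluePath, ← (𝕀.glueComp α hφ g j).2 (Or.inl v), eq_cast_iff_heq, glueTube, Or.by_cases,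
    dif_pos v]
  exact (𝕀.square_one_right α _ _).symm

noncomputable def extendFiber : {z : 𝕀.Fiber α y // ∀ v, g v = z} :=
  ⟨⟨𝕀.gluePathOver α hφ g 𝕀.i0,
      𝕀.gluePath α hφ g, 𝕀.gluePath_zero α hφ g, 𝕀.gluePath_one α hφ g⟩,
    fun v => Fiber.ext 𝕀 α (𝕀.fst_eq_gluePathOver_zero α hφ g v)
      (funext (𝕀.path_eq_gluePath α hφ g v))⟩

end Extension

end Fiber

noncomputable def contrOfExtend {X : Type}
    (ext : ∀ φ, 𝕀.cof φ → (g : φ → X) → {x : X // ∀ v, g v = x}) : Contr 𝕀.i0 𝕀.i1 X :=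
  let x0 := (ext False 𝕀.cof_false False.elim).1
  ⟨x0, fun x => ⟨fun s => (ext (𝕀.OnBoundary s) (𝕀.cof_onBoundary s)
      fun u => u.by_cases (fun _ => x0) (fun _ => x)).1, by
    constructor
    · exact ((ext _ _ _).2 (Or.inl rfl)).symm.trans (dif_pos rfl)
    · exact ((ext _ _ _).2 (Or.inr rfl)).symm.trans (dif_neg 𝕀.zero_ne_one.symm)⟩⟩

noncomputable def transportEquiv {A : I → Type} (α : 𝕀.IsFib A) :
    EquivStr 𝕀.i0 𝕀.i1 (𝕀.transport α) :=
  fun _ => 𝕀.contrOfExtend fun _ hφ g => 𝕀.extendFiber α hφ g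

end Interval

/-- Converting paths between fibrations to equivalences: for a fibration
`P` over `Γ × I`, composition from `i0` to `i1` along the paths `i ↦ (x, i)`
(from the empty cofibrant partial path) is an equivalence. -/
theorem path_to_equiv (i0 i1 : I) (cof : Prop → Prop)
    (ax2 : i0 ≠ i1)
    (cnx dsj : I → I → I)
    (ax3 : ∀ x, cnx i0 x = i0 ∧ cnx x i0 = i0 ∧ cnx i1 x = x ∧ cnx x i1 = x)
    (ax4 : ∀ x, dsj i0 x = x ∧ dsj x i0 = x ∧ dsj i1 x = i1 ∧ dsj x i1 = i1)
    (ax5 : ∀ i : I, cof (i = i0) ∧ cof (i = i1))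
    (ax6 : ∀ φ ψ : Prop, cof φ → cof ψ → cof (φ ∨ ψ))
    (Γ : Type) (P : Γ × I → Type) (ρ : isFib i0 i1 cof P)
    (hF : cof False) :
    Nonempty ((x : Γ) →
      EquivStr i0 i1 (fun a : P (x, i0) =>
        (ρ false (fun i => (x, i)) False hF (fun u => u.elim) a
          (fun u => u.elim)).1)) :=
  let 𝕀 : Interval I := ⟨i0, i1, cof, cnx, dsj, ax2, ax3, ax4, ax5, ax6⟩
  ⟨fun x => 𝕀.transportEquiv (reind i0 i1 cof (fun i => (x, i)) ρ)⟩

end CCHM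
end

section
/- Let C be a small category such that the colimit functor colim : (Cᵒᵖ ⥤ Type) ⥤ Type (left adjoint to the constant-presheaf functor) preserves finite products (i.e. C is cosifted). Then for every pair of objects c, i of C, the map Bool → ((yoneda.obj c ⨯ yoneda.obj i) ⟶ (Functor.const Cᵒᵖ).obj Bool) sending b : Bool to the natural transformation that is constantly b is a bijection; in other words, there are exactly two morphisms from the presheaf y(c) ⨯ y(i) to the constant presheaf at Bool, so every decidable subobject of y(c) ⨯ y(i) is either the smallest or the largest subobject (the representable presheaf y(i) is internally connected). -/
/-!
Maps from a presheaf `P` to the constant presheaf at `X` are maps `colim P → X`, so when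
`colim P` is a point they are exactly the constant ones. The colimit of a representable `y c` is
a point, since `𝟙 c` is a terminal element of `y c`; as `colim` preserves binary products,
`colim (y c ⨯ y i)` is a point as well.
-/

open CategoryTheory CategoryTheory.Limits

namespace CategoryTheory.Limits

universe u

variable {J : Type u} [SmallCategory J]

theorem bijective_const_of_unique_colimit (P : J ⥤ Type u) [Unique (colimit P)] (X : Type u) :
    Function.Bijective (fun x : X =>
      ({ app := fun _ => TypeCat.ofHom (fun _ => x), naturality := fun _ _ _ => rfl } :
        P ⟶ (Functor.const J).obj X)) := by
  let e : X ≃ (P ⟶ (Functor.const J).obj X) :=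
    (Equiv.funUnique (colimit P) X).symm.trans
      (TypeCat.homEquiv.symm.trans (colimConstAdj.homEquiv P X))
  convert e.bijective with x
  · rfl
  · ext; rfl

noncomputable instance uniqueColimitYonedaObj {C : Type u} [SmallCategory C] (c : C) :
    Unique (colimit (yoneda.obj c)) :=
  (HasColimit.isoOfNatIso (Coyoneda.objOpOp c).symm ≪≫
    Coyoneda.colimitCoyonedaIso _).toEquiv.unique

noncomputable instance uniqueColimitProd (P Q : J ⥤ Type u)
    [PreservesLimit (pair P Q) (colim : (J ⥤ Type u) ⥤ Type u)]
    [Unique (colimit P)] [Unique (colimit Q)] : Unique (colimit (P ⨯ Q)) :=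
  have : Unique (colimit P × colimit Q) := Unique.mk' _
  (PreservesLimitPair.iso colim P Q ≪≫
    Types.binaryProductIso (colimit P) (colimit Q)).toEquiv.unique

end CategoryTheory.Limits

/-- If the small category `C` is cosifted (the colimit functor on `Type`-valued
presheaves preserves finite products), then for any objects `c i : C`, the only
morphisms from `y(c) ⨯ y(i)` to the constant presheaf at `Bool` are the two
constant ones; i.e. representables are internally connected. -/
theorem representable_internally_connected
    (C : Type) [SmallCategory C]
    [PreservesFiniteProducts (colim : (Cᵒᵖ ⥤ Type) ⥤ Type)]
    (c i : C) :
    Function.Bijective (fun b : Bool =>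
      ({ app := fun _ => TypeCat.ofHom (fun _ => b), naturality := fun _ _ _ => rfl } :
        (yoneda.obj c ⨯ yoneda.obj i) ⟶ (Functor.const Cᵒᵖ).obj Bool)) :=
  bijective_const_of_unique_colimit _ Bool
end

section
/- Let C be a small category, c an object of C, and S a sieve on c whose membership is decidable (for every object c' and morphism f : c' ⟶ c, it is decidable whether f ∈ S). Let 𝒮 denote the full subcategory of the over category C/c on those objects f with f ∈ S, with inclusion functor ι : 𝒮 ⥤ C/c. Then for all functors A : 𝒮ᵒᵖ ⥤ Type and B : (C/c)ᵒᵖ ⥤ Type and every natural isomorphism s : A ≅ ι.op ⋙ B, there exist a functor B' : (C/c)ᵒᵖ ⥤ Type and a natural isomorphism s' : B' ≅ B such that ι.op ⋙ B' = A and, modulo this equality of functors, the whiskering of s' along ι.op equals s. (This is the core of the statement that decidable sieves satisfy the strictness axiom in presheaf toposes.) -/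
/-!
Define `B'` on objects by cases on membership in `S`: `B'(f) = A(f)` for `f ∈ S` and
`B'(f) = B(f)` otherwise, and let it act on morphisms by transporting the action of `B` along
the isomorphisms `s⁻¹ : B(f) ≅ A(f)` (identities off the sieve). These isomorphisms assemble into
`s' : B' ≅ B`, and on `𝒮` the transported action is that of `A` by naturality of `s`.
-/

open CategoryTheory Opposite

namespace CategoryTheory

lemma Iso.heq_of_app_hom {J : Type*} [Category J] {K : Type*} [Category K] {F G H : J ⥤ K}
    (h : F = G) (α : F ≅ H) (β : G ≅ H)
    (happ : ∀ X, α.hom.app X = eqToHom (Functor.congr_obj h X) ≫ β.hom.app X) :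
    α ≍ β := by
  subst h
  exact heq_of_eq (Iso.ext (NatTrans.ext (funext fun X => by simpa using happ X)))

namespace ObjectProperty

variable {E : Type*} [Category E] {D : Type*} [Category D] {P : ObjectProperty E} [DecidablePred P]
  {A : P.FullSubcategoryᵒᵖ ⥤ D} {B : Eᵒᵖ ⥤ D}

variable (A B) in
def extendObj (X : Eᵒᵖ) : D :=
  if h : P X.unop then A.obj (op ⟨X.unop, h⟩) else B.obj X

lemma extendObj_of_mem {X : Eᵒᵖ} (h : P X.unop) : extendObj A B X = A.obj (op ⟨X.unop, h⟩) :=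
  dif_pos h

lemma extendObj_ι_op_obj (X : P.FullSubcategoryᵒᵖ) : extendObj A B (P.ι.op.obj X) = A.obj X :=
  extendObj_of_mem X.unop.property

lemma extendObj_of_not_mem {X : Eᵒᵖ} (h : ¬P X.unop) : extendObj A B X = B.obj X :=
  dif_neg h

def extendObjIso (s : A ≅ P.ι.op ⋙ B) (X : Eᵒᵖ) : B.obj X ≅ extendObj A B X :=
  if h : P X.unop then (s.app (op ⟨X.unop, h⟩)).symm ≪≫ eqToIso (extendObj_of_mem h).symm
  else eqToIso (extendObj_of_not_mem h).symm

lemma extendObjIso_ι_op_obj (s : A ≅ P.ι.op ⋙ B) (X : P.FullSubcategoryᵒᵖ) :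
    extendObjIso s (P.ι.op.obj X) = (s.app X).symm ≪≫ eqToIso (extendObj_ι_op_obj X).symm :=
  dif_pos X.unop.property

def extend (s : A ≅ P.ι.op ⋙ B) : Eᵒᵖ ⥤ D :=
  B.copyObj (extendObj A B) (extendObjIso s)

def extendIso (s : A ≅ P.ι.op ⋙ B) : extend s ≅ B :=
  (B.isoCopyObj _ (extendObjIso s)).symm

lemma ι_op_comp_extend (s : A ≅ P.ι.op ⋙ B) : P.ι.op ⋙ extend s = A := by
  refine Functor.ext extendObj_ι_op_obj fun X Y f => ?_
  simp only [extend, Functor.comp_map, Functor.copyObj, extendObjIso_ι_op_obj, Iso.trans_inv,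
    Iso.trans_hom, Iso.symm_inv, Iso.symm_hom, eqToIso.hom, eqToIso.inv, Iso.app_hom,
    Iso.app_inv, Category.assoc]
  rw [← Functor.comp_map, ← s.hom.naturality_assoc, Iso.hom_inv_id_app_assoc]

lemma isoWhiskerLeft_extendIso_heq (s : A ≅ P.ι.op ⋙ B) :
    Functor.isoWhiskerLeft P.ι.op (extendIso s) ≍ s := by
  refine Iso.heq_of_app_hom (ι_op_comp_extend s) _ _ fun X => ?_
  show (extendObjIso s (P.ι.op.obj X)).inv = _
  rw [extendObjIso_ι_op_obj]
  simp only [Iso.trans_inv, eqToIso.inv, Iso.symm_inv, Iso.app_hom]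
  rfl

end ObjectProperty

end CategoryTheory

/-- The strictness property for a decidable sieve `S` on `c`: any presheaf `A` on
the full subcategory `𝒮` of `C/c` determined by `S` that is isomorphic to the
restriction of a presheaf `B` on `C/c` extends strictly to a presheaf `B'` on
`C/c` isomorphic to `B`, with the isomorphism restricting to the given one. -/
theorem decidable_sieve_strictness
    (C : Type) [SmallCategory C] (c : C) (S : Sieve c)
    (hdec : ∀ (c' : C) (f : c' ⟶ c), Decidable (S.arrows f))
    (A : (ObjectProperty.FullSubcategory (fun g : Over c => S.arrows g.hom))ᵒᵖ ⥤ Type)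
    (B : (Over c)ᵒᵖ ⥤ Type)
    (s : A ≅ (ObjectProperty.ι (fun g : Over c => S.arrows g.hom)).op ⋙ B) :
    ∃ (B' : (Over c)ᵒᵖ ⥤ Type) (s' : B' ≅ B),
      ∃ _h : (ObjectProperty.ι (fun g : Over c => S.arrows g.hom)).op ⋙ B' = A,
        HEq (Functor.isoWhiskerLeft (ObjectProperty.ι
          (fun g : Over c => S.arrows g.hom)).op s') s := by
  let : DecidablePred (fun g : Over c => S.arrows g.hom) := fun g => hdec _ g.hom
  exact ⟨ObjectProperty.extend s, ObjectProperty.extendIso s, ObjectProperty.ι_op_comp_extend s,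
    ObjectProperty.isoWhiskerLeft_extendIso_heq s⟩
end
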